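/- Let G be a subgraph of Q_n, let e = xy be an edge of G whose coordinate direction is maximal among all edges of G, and let G' = G - e. Then any increasing geodesic in G' ending at x (or at y) does not use the direction of e, and consequently S(G) ≥ S(G') + 2, where S(H) = Σ_{v ∈ V(H)} |L_H(v)| and |L_H(v)| is the maximum length of an increasing geodesic in H ending at v. -/

import Mathlib

open SimpleGraph Finset
open scoped symmDiff

/-- The hypercube `Q_n` on vertex set `{0,1}^n`: two vertices are adjacent iff they
differ in exactly one coordinate. -/
def Q (n : ℕ) : SimpleGraph (Fin n → Bool) where
  Adj x y := hammingDist x y = 1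
  symm := ⟨fun x y h => (hammingDist_comm y x).trans h⟩
  loopless := ⟨fun x h => by simp at h⟩

/-- The coordinate direction of a step from `x` to `y` (for an edge of `Q n`, the unique
coordinate where they differ), as a natural number. -/
def dir {n : ℕ} (x y : Fin n → Bool) : ℕ :=
  (Finset.univ.filter fun i => x i ≠ y i).sup fun i => (i : ℕ)

/-- The list of coordinate directions of the edges of a walk in `Q n`. -/
def dirs {n : ℕ} {u v : Fin n → Bool} (p : (Q n).Walk u v) : List ℕ :=
  p.darts.map fun d => dir d.fst d.snd

/-- A geodesic in `Q n`: a path no two of whose edges lie in the same coordinate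
direction. -/
def IsGeodesic {n : ℕ} {u v : Fin n → Bool} (p : (Q n).Walk u v) : Prop :=
  p.IsPath ∧ (dirs p).Nodup

/-- An increasing geodesic in `Q n`: a path whose successive edge directions strictly
increase. -/
def IsIncGeodesic {n : ℕ} {u v : Fin n → Bool} (p : (Q n).Walk u v) : Prop :=
  p.IsPath ∧ (dirs p).Chain' (· < ·)

/-- `maxInc G x` is the maximum length of an increasing geodesic contained in the
subgraph `G` of `Q n` and ending at the vertex `x`. -/
noncomputable def maxInc {n : ℕ} (G : (Q n).Subgraph) (x : Fin n → Bool) : ℕ :=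
  sSup {l | ∃ u, ∃ p : (Q n).Walk u x, p.toSubgraph ≤ G ∧ IsIncGeodesic p ∧ p.length = l}

/-! An increasing geodesic of `G - xy` that used the direction of `xy` would have to use it on
its last edge, since directions increase and that of `xy` is maximal in `G`; if the geodesic
ends at `x` or `y`, that last edge can only be `xy` itself. So a longest increasing geodesic of
`G - xy` ending at `y` extends through `xy` to one ending at `x` and vice versa, while `maxInc`
can only grow at the other vertices when `xy` is added. -/

lemma SimpleGraph.Subgraph.adj_of_mem_darts {V : Type*} {G : SimpleGraph V} {H : G.Subgraph}
    {u v : V} {p : G.Walk u v} (hp : p.toSubgraph ≤ H) {d : G.Dart} (hd : d ∈ p.darts) :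
    H.Adj d.fst d.snd :=
  hp.2 (Walk.adj_toSubgraph_iff_mem_edges.mpr (List.mem_map_of_mem hd))

lemma finsum_mem_add_two_le {α : Type*} {s : Set α} (hs : s.Finite) {f g : α → ℕ}
    (hfg : ∀ v ∈ s, f v ≤ g v) {x y : α} (hx : x ∈ s) (hy : y ∈ s) (hxy : x ≠ y)
    (hfx : f x + 1 ≤ g y) (hfy : f y + 1 ≤ g x) :
    (∑ᶠ v ∈ s, f v) + 2 ≤ ∑ᶠ v ∈ s, g v := by
  classical
  rw [finsum_mem_eq_finite_toFinset_sum _ hs, finsum_mem_eq_finite_toFinset_sum _ hs]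
  have hpair : {x, y} ⊆ hs.toFinset := by
    simpa only [insert_subset_iff, singleton_subset_iff, hs.mem_toFinset] using ⟨hx, hy⟩
  rw [← sum_sdiff hpair, ← sum_sdiff hpair, sum_pair hxy, sum_pair hxy]
  have : ∑ v ∈ hs.toFinset \ {x, y}, f v ≤ ∑ v ∈ hs.toFinset \ {x, y}, g v :=
    sum_le_sum fun v hv => hfg v (hs.mem_toFinset.mp (mem_sdiff.mp hv).1)
  omega

section Hypercube

variable {n : ℕ}

lemma Q.exists_dir_eq_of_adj {a b : Fin n → Bool} (h : (Q n).Adj a b) :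
    ∃ j : Fin n, dir a b = j ∧ a j ≠ b j ∧ ∀ k, k ≠ j → a k = b k := by
  have hcard : (univ.filter fun i => a i ≠ b i).card = 1 := h
  obtain ⟨j, hj⟩ := card_eq_one.mp hcard
  refine ⟨j, by rw [dir, hj, sup_singleton], ?_, fun k hk => ?_⟩
  · have hj' : j ∈ univ.filter fun i => a i ≠ b i := hj ▸ mem_singleton_self j
    simpa using hj'
  · by_contra hne
    have hk' : k ∈ univ.filter fun i => a i ≠ b i := by simpa using hne
    exact hk (mem_singleton.mp (hj ▸ hk'))

lemma dir_comm (a b : Fin n → Bool) : dir a b = dir b a := by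
  simp only [dir, ne_comm]

lemma Q.eq_of_adj_of_dir_eq {a b z : Fin n → Bool} (ha : (Q n).Adj a z) (hb : (Q n).Adj b z)
    (hd : dir a z = dir b z) : a = b := by
  obtain ⟨j, hja, hza, ha⟩ := Q.exists_dir_eq_of_adj ha
  obtain ⟨j', hjb, hzb, hb⟩ := Q.exists_dir_eq_of_adj hb
  obtain rfl : j = j' := Fin.ext (by omega)
  funext k
  by_cases hk : k = j
  · subst hk
    revert hza hzb
    cases a k <;> cases b k <;> cases z k <;> decide
  · rw [ha k hk, hb k hk]

lemma mem_dirs_of_ne {u v : Fin n → Bool} (p : (Q n).Walk u v) {j : Fin n} (h : u j ≠ v j) :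
    (j : ℕ) ∈ dirs p := by
  induction p with
  | nil => exact absurd rfl h
  | @cons a b c hadj q ih =>
    change j.val ∈ dir a b :: dirs q
    by_cases hab : a j = b j
    · exact List.mem_cons_of_mem _ (ih fun hbc => h (hab.trans hbc))
    · obtain ⟨j', hdir, -, hsame⟩ := Q.exists_dir_eq_of_adj hadj
      obtain rfl : j = j' := by_contra fun hne => hab (hsame j hne)
      exact hdir ▸ List.mem_cons_self

lemma dir_mem_dirs_of_mem_support {u y x : Fin n → Bool} (q : (Q n).Walk u y)
    (h : (Q n).Adj y x) (hx : x ∈ q.support) : dir y x ∈ dirs q := by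
  obtain ⟨j, hdir, hj, -⟩ := Q.exists_dir_eq_of_adj h.symm
  obtain ⟨d, hd, hdj⟩ := List.mem_map.mp (mem_dirs_of_ne (q.dropUntil x hx) hj)
  rw [dir_comm, hdir, ← hdj]
  exact List.mem_map_of_mem (q.darts_dropUntil_subset_darts hx hd)

lemma IsIncGeodesic.concat {u y x : Fin n → Bool} {q : (Q n).Walk u y} (hq : IsIncGeodesic q)
    (h : (Q n).Adj y x) (hlt : ∀ a ∈ dirs q, a < dir y x) : IsIncGeodesic (q.concat h) := by
  have hx : x ∉ q.support := fun hx => (hlt _ (dir_mem_dirs_of_mem_support q h hx)).false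
  have hdirs : dirs (q.concat h) = dirs q ++ [dir y x] := by
    simp [dirs, Walk.darts_concat]
  refine ⟨hq.1.concat hx h, hdirs ▸ hq.2.append (List.isChain_singleton _) ?_⟩
  intro a ha b hb
  obtain rfl : b = dir y x := by simpa using hb.symm
  exact hlt a (List.mem_of_getLast? ha)

lemma snd_eq_of_dir_eq_of_forall_dir_le {w z : Fin n → Bool} {D : ℕ} (p : (Q n).Walk w z)
    (hinc : (dirs p).IsChain (· < ·)) (hle : ∀ d ∈ p.darts, dir d.fst d.snd ≤ D)
    {d : (Q n).Dart} (hd : d ∈ p.darts) (hdD : dir d.fst d.snd = D) : d.snd = z := by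
  induction p with
  | nil => simp at hd
  | @cons a b c hadj q ih =>
    rcases List.mem_cons.mp hd with rfl | hd
    · cases q with
      | nil => rfl
      | @cons b c' z hadj' q' =>
        have hlt : dir a b < dir b c' := (List.isChain_cons_cons.mp hinc).1
        have := hle _ (List.mem_cons_of_mem _ List.mem_cons_self)
        simp only at hdD this
        omega
    · exact ih hinc.tail (fun d' hd' => hle d' (List.mem_cons_of_mem _ hd')) hd

section MaxInc

variable {H H' : (Q n).Subgraph} {v : Fin n → Bool}

def incLengths (H : (Q n).Subgraph) (v : Fin n → Bool) : Set ℕ :=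
  {l | ∃ u, ∃ p : (Q n).Walk u v, p.toSubgraph ≤ H ∧ IsIncGeodesic p ∧ p.length = l}

lemma maxInc_eq_sSup_incLengths : maxInc H v = sSup (incLengths H v) := rfl

lemma bddAbove_incLengths : BddAbove (incLengths H v) := by
  refine ⟨Fintype.card (Fin n → Bool), ?_⟩
  rintro _ ⟨_, _, _, hp, rfl⟩
  exact hp.1.length_lt.le

lemma le_maxInc {u : Fin n → Bool} (p : (Q n).Walk u v) (hp : p.toSubgraph ≤ H)
    (hinc : IsIncGeodesic p) : p.length ≤ maxInc H v :=
  le_csSup bddAbove_incLengths ⟨u, p, hp, hinc, rfl⟩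

lemma exists_isIncGeodesic_length_eq_maxInc (hv : v ∈ H.verts) :
    ∃ u, ∃ p : (Q n).Walk u v,
      p.toSubgraph ≤ H ∧ IsIncGeodesic p ∧ p.length = maxInc H v := by
  have hnil : (Walk.nil : (Q n).Walk v v).toSubgraph ≤ H :=
    (singletonSubgraph_le_iff _ _).mpr hv
  exact Nat.sSup_mem (s := incLengths H v) ⟨0, v, .nil, hnil, ⟨.nil, List.isChain_nil⟩, rfl⟩
    bddAbove_incLengths

lemma maxInc_mono (h : H ≤ H') (v : Fin n → Bool) : maxInc H v ≤ maxInc H' v := by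
  rcases (incLengths H v).eq_empty_or_nonempty with hempty | hne
  · rw [maxInc_eq_sSup_incLengths, hempty, csSup_empty]
    exact Nat.zero_le _
  · exact csSup_le_csSup bddAbove_incLengths hne
      fun _ ⟨u, p, hp, hinc, hlen⟩ => ⟨u, p, hp.trans h, hinc, hlen⟩

end MaxInc

section MaxEdge

variable {G : (Q n).Subgraph} {x y : Fin n → Bool}

lemma dir_ne_of_isIncGeodesic_deleteEdges (hxy : (Q n).Adj x y)
    (hmax : ∀ a b : Fin n → Bool, G.Adj a b → dir a b ≤ dir x y) {w z : Fin n → Bool}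
    (hz : z = x ∨ z = y) (p : (Q n).Walk w z) (hp : p.toSubgraph ≤ G.deleteEdges {s(x, y)})
    (hinc : IsIncGeodesic p) : ∀ d ∈ p.darts, dir d.fst d.snd ≠ dir x y := by
  intro d hd hdir
  have hadj := Subgraph.adj_of_mem_darts hp hd
  have hle : ∀ d ∈ p.darts, dir d.fst d.snd ≤ dir x y := fun d hd =>
    hmax _ _ ((Subgraph.deleteEdges_le _).2 (Subgraph.adj_of_mem_darts hp hd))
  have hsnd : d.snd = z := snd_eq_of_dir_eq_of_forall_dir_le p hinc.2 hle hd hdir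
  have hadjz : (Q n).Adj d.fst z := hsnd ▸ d.adj
  have hdirz : dir d.fst z = dir x y := hsnd ▸ hdir
  have hedge : s(d.fst, d.snd) = s(x, y) := by
    rcases hz with rfl | rfl
    · rw [Q.eq_of_adj_of_dir_eq hadjz hxy.symm (hdirz.trans (dir_comm _ _)), hsnd,
        Sym2.eq_swap]
    · rw [Q.eq_of_adj_of_dir_eq hadjz hxy hdirz, hsnd]
  exact ((Subgraph.deleteEdges_adj _ _ _).mp hadj).2 (hedge ▸ rfl)

lemma maxInc_deleteEdges_add_one_le (hxy : G.Adj x y)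
    (hmax : ∀ a b : Fin n → Bool, G.Adj a b → dir a b ≤ dir x y) :
    maxInc (G.deleteEdges {s(x, y)}) y + 1 ≤ maxInc G x := by
  obtain ⟨u, q, hq, hinc, hlen⟩ :=
    exists_isIncGeodesic_length_eq_maxInc (H := G.deleteEdges {s(x, y)}) hxy.snd_mem
  have hlt : ∀ a ∈ dirs q, a < dir y x := by
    simp only [dirs, List.forall_mem_map]
    intro d hd
    rw [dir_comm y x]
    exact lt_of_le_of_ne
      (hmax _ _ ((Subgraph.deleteEdges_le _).2 (Subgraph.adj_of_mem_darts hq hd)))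
      (dir_ne_of_isIncGeodesic_deleteEdges hxy.adj_sub hmax (Or.inr rfl) q hq hinc d hd)
  have hsub : (q.concat hxy.adj_sub.symm).toSubgraph ≤ G := by
    rw [Walk.concat_eq_append, Walk.toSubgraph_append, Walk.toSubgraph_cons_nil_eq_subgraphOfAdj]
    exact sup_le (hq.trans (Subgraph.deleteEdges_le _)) (subgraphOfAdj_le_of_adj G hxy.symm)
  have := le_maxInc _ hsub (hinc.concat hxy.adj_sub.symm hlt)
  rwa [Walk.length_concat, hlen] at this

end MaxEdge

end Hypercube

/-- Let `e = xy` be an edge of a subgraph `G` of `Q n` of maximal coordinate direction,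
and let `G' = G - e`.  Then no increasing geodesic in `G'` ending at `x` or at `y` uses
the direction of `e`, and consequently `S(G) ≥ S(G') + 2`, where
`S(H) = ∑_{v ∈ V(H)} |L_H(v)|` and `|L_H(v)|` is the maximum length of an increasing
geodesic in `H` ending at `v`. -/
theorem stmt17 (n : ℕ) (G : (Q n).Subgraph) (x y : Fin n → Bool) (hxy : G.Adj x y)
    (hmax : ∀ a b : Fin n → Bool, G.Adj a b → dir a b ≤ dir x y) :
    (∀ (w z : Fin n → Bool), (z = x ∨ z = y) → ∀ p : (Q n).Walk w z,
      p.toSubgraph ≤ G.deleteEdges {s(x, y)} → IsIncGeodesic p →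
      ∀ dd ∈ p.darts, dir dd.fst dd.snd ≠ dir x y) ∧
    (∑ᶠ v ∈ (G.deleteEdges {s(x, y)}).verts, maxInc (G.deleteEdges {s(x, y)}) v) + 2 ≤
      ∑ᶠ v ∈ G.verts, maxInc G v := by
  refine ⟨fun w z hz => dir_ne_of_isIncGeodesic_deleteEdges hxy.adj_sub hmax hz, ?_⟩
  have hyx : maxInc (G.deleteEdges {s(x, y)}) x + 1 ≤ maxInc G y := by
    rw [Sym2.eq_swap]
    exact maxInc_deleteEdges_add_one_le hxy.symm
      fun a b hab => (hmax a b hab).trans_eq (dir_comm x y)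
  exact finsum_mem_add_two_le (Set.toFinite _)
    (fun v _ => maxInc_mono (Subgraph.deleteEdges_le _) v) hxy.fst_mem hxy.snd_mem hxy.ne
    hyx (maxInc_deleteEdges_add_one_le hxy hmax)
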